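/- Assume every firm has Hicks-neutral productivity, so that the entropy-corrected productivity vector is u ∈ ℝ^{nL} with u_i = b_{ℓ(i),0} log b_{ℓ(i),0} for every firm i. Then the social welfare W(A^𝒬) := a_0^n ⋅ ( (I − A^𝒬)^{-1} u ) is the same for all 𝒬-clustered networks: for any two partitions 𝒬 and 𝒬' of {1,…,n}, a_0^n ⋅ ( (I − A^𝒬)^{-1} u ) = a_0^n ⋅ ( (I − A^{𝒬'})^{-1} u ). -/

import Mathlib

/-!
Replicate economy with n countries and L categories; firms are pairs
(category, country) in `Fin L × Fin n`; a partition 𝒬 of the countries is a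
`Setoid (Fin n)` and `AQ B Q` is the 𝒬-clustered network A^𝒬.

STATEMENT 11: under Hicks-neutral productivity the entropy-corrected
productivity vector is u_i = b_{ℓ(i),0} log b_{ℓ(i),0}, and the social
welfare W(A^𝒬) = a_0^n ⋅ ((I − A^𝒬)⁻¹ u) is the same for all partitions 𝒬.
-/

noncomputable section

open Matrix Finset

attribute [local instance] Classical.propDecidable

/-- Firms: (category, country). -/
abbrev Firm (L n : ℕ) := Fin L × Fin n

/-- Cardinality of the cluster (equivalence class) of country `c`. -/
def clusterCard {n : ℕ} (Q : Setoid (Fin n)) (c : Fin n) : ℕ :=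
  (univ.filter fun c' => Q.r c c').card

/-- The 𝒬-clustered production network A^𝒬. -/
def AQ {L n : ℕ} (B : Fin L → Fin L → ℝ) (Q : Setoid (Fin n)) :
    Matrix (Firm L n) (Firm L n) ℝ :=
  Matrix.of fun i j =>
    if i.1 = j.1 then (if i = j then B i.1 i.1 else 0)
    else if Q.r i.2 j.2 then B i.1 j.1 / (clusterCard Q i.2 : ℝ) else 0

/-- Household consumption shares on firms: a0 ℓ / n. -/
def a0n {L : ℕ} (n : ℕ) (a0 : Fin L → ℝ) : Firm L n → ℝ :=
  fun i => a0 i.1 / n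

/-!
On vectors that depend only on the category of a firm, every clustered network `A^𝒬` acts as the
category matrix `B`: a firm of category `ℓ` spends the share `B ℓ ℓ'` on category `ℓ'`, however
it is spread over the countries of its cluster. Since Hicks-neutral `u` is such a vector,
`(I - A^𝒬)⁻¹ u` is the lift of `(I - B)⁻¹` applied to the category profile of `u`, whatever `𝒬` is.
Both inverses exist because the two matrices are nonnegative with row sums below `1`.
-/

theorem Matrix.det_one_sub_ne_zero_of_sum_row_lt_one {ι : Type*} [Fintype ι] [DecidableEq ι]
    {M : Matrix ι ι ℝ} (hM : ∀ i j, 0 ≤ M i j) (hrow : ∀ i, ∑ j, M i j < 1) :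
    (1 - M).det ≠ 0 := by
  refine det_ne_zero_of_sum_row_lt_diag fun k => ?_
  have hoff : ∀ j ∈ univ.erase k, ‖(1 - M) k j‖ = M k j := fun j hj => by
    rw [sub_apply, one_apply_ne (mem_erase.1 hj).1.symm, zero_sub, norm_neg,
      Real.norm_of_nonneg (hM k j)]
  have hdiag : M k k ≤ ∑ j, M k j := single_le_sum (fun j _ => hM k j) (mem_univ k)
  rw [sum_congr rfl hoff, sum_erase_eq_sub (mem_univ k), sub_apply, one_apply_eq,
    Real.norm_of_nonneg (by linarith [hrow k])]
  linarith [hrow k]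

section Lift

variable {α β R : Type*} [Fintype α] [Fintype β] [CommRing R]
  {M : Matrix (α × β) (α × β) R} {B : Matrix α α R}

theorem Matrix.mulVec_comp_fst_of_sum_snd (hM : ∀ i a, ∑ b, M i (a, b) = B i.1 a) (w : α → R) :
    M *ᵥ (w ∘ Prod.fst) = (B *ᵥ w) ∘ Prod.fst := by
  funext i
  simp only [mulVec, dotProduct, Function.comp_apply, Fintype.sum_prod_type, ← sum_mul, hM]

theorem Matrix.one_sub_mulVec_comp_fst [DecidableEq α] [DecidableEq β]
    (hM : ∀ i a, ∑ b, M i (a, b) = B i.1 a) (w : α → R) :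
    (1 - M) *ᵥ (w ∘ Prod.fst) = ((1 - B) *ᵥ w) ∘ Prod.fst := by
  rw [sub_mulVec, sub_mulVec, one_mulVec, one_mulVec, mulVec_comp_fst_of_sum_snd hM]
  rfl

theorem Matrix.one_sub_inv_mulVec_comp_fst [DecidableEq α] [DecidableEq β]
    (hM : ∀ i a, ∑ b, M i (a, b) = B i.1 a)
    (hMdet : IsUnit (1 - M).det) (hBdet : IsUnit (1 - B).det) (v : α → R) :
    (1 - M)⁻¹ *ᵥ (v ∘ Prod.fst) = ((1 - B)⁻¹ *ᵥ v) ∘ Prod.fst := by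
  have hsolve : (1 - M) *ᵥ (((1 - B)⁻¹ *ᵥ v) ∘ Prod.fst) = v ∘ Prod.fst := by
    rw [one_sub_mulVec_comp_fst hM, mulVec_mulVec, mul_nonsing_inv _ hBdet, one_mulVec]
  rw [← hsolve, mulVec_mulVec, nonsing_inv_mul _ hMdet, one_mulVec]

end Lift

section Clustered

variable {L n : ℕ} (B : Fin L → Fin L → ℝ) (Q : Setoid (Fin n))

theorem clusterCard_pos (c : Fin n) : 0 < clusterCard Q c :=
  card_pos.2 ⟨c, mem_filter.2 ⟨mem_univ c, Q.refl' c⟩⟩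

theorem AQ_nonneg (hB : ∀ ℓ ℓ', 0 ≤ B ℓ ℓ') (i j : Firm L n) : 0 ≤ AQ B Q i j := by
  simp only [AQ, of_apply]
  split_ifs <;> first | exact le_rfl | exact hB _ _ | exact div_nonneg (hB _ _) (Nat.cast_nonneg _)

theorem sum_AQ_apply_snd (i : Firm L n) (ℓ' : Fin L) : ∑ c', AQ B Q i (ℓ', c') = B i.1 ℓ' := by
  simp only [AQ, of_apply]
  by_cases h : i.1 = ℓ'
  · subst h
    simp [Prod.ext_iff, eq_comm]
  · have hcard : (clusterCard Q i.2 : ℝ) ≠ 0 := by exact_mod_cast (clusterCard_pos Q i.2).ne'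
    simp only [if_neg h]
    rw [sum_ite, sum_const_zero, add_zero, sum_const, nsmul_eq_mul]
    exact mul_div_cancel₀ _ hcard

theorem sum_AQ_apply (i : Firm L n) : ∑ j, AQ B Q i j = ∑ ℓ', B i.1 ℓ' := by
  simp only [Fintype.sum_prod_type, sum_AQ_apply_snd]

end Clustered

theorem hicks_neutral_welfare_invariance_general
    (n L : ℕ)
    (a0 b0 : Fin L → ℝ) (B : Fin L → Fin L → ℝ)
    (hb0 : ∀ ℓ, 0 < b0 ℓ) (hB : ∀ ℓ ℓ', 0 ≤ B ℓ ℓ')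
    (hrow : ∀ ℓ, b0 ℓ + ∑ ℓ', B ℓ ℓ' ≤ 1)
    (u : Firm L n → ℝ) (hu : ∀ i, u i = b0 i.1 * Real.log (b0 i.1))
    (Q Q' : Setoid (Fin n)) :
    a0n n a0 ⬝ᵥ ((1 - AQ B Q)⁻¹.mulVec u)
      = a0n n a0 ⬝ᵥ ((1 - AQ B Q')⁻¹.mulVec u) := by
  have hBrow : ∀ ℓ, ∑ ℓ', B ℓ ℓ' < 1 := fun ℓ => by linarith [hrow ℓ, hb0 ℓ]
  have hBdet : IsUnit (1 - of B).det :=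
    (det_one_sub_ne_zero_of_sum_row_lt_one (M := of B) hB hBrow).isUnit
  have hu' : u = (fun ℓ => b0 ℓ * Real.log (b0 ℓ)) ∘ Prod.fst := funext hu
  have hlift : ∀ Q : Setoid (Fin n), (1 - AQ B Q)⁻¹ *ᵥ u
      = ((1 - of B)⁻¹ *ᵥ fun ℓ => b0 ℓ * Real.log (b0 ℓ)) ∘ Prod.fst := fun Q =>
    hu' ▸ one_sub_inv_mulVec_comp_fst (sum_AQ_apply_snd B Q)
      (det_one_sub_ne_zero_of_sum_row_lt_one (AQ_nonneg B Q hB)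
        fun i => (sum_AQ_apply B Q i).trans_lt (hBrow i.1)).isUnit hBdet _
  rw [hlift Q, hlift Q']

theorem hicks_neutral_welfare_invariance
    (n L : ℕ) (hn : 1 ≤ n) (hL : 1 ≤ L)
    (a0 b0 : Fin L → ℝ) (B : Fin L → Fin L → ℝ)
    (ha0 : ∀ ℓ, 0 < a0 ℓ) (ha0sum : ∑ ℓ, a0 ℓ = 1)
    (hb0 : ∀ ℓ, 0 < b0 ℓ) (hB : ∀ ℓ ℓ', 0 ≤ B ℓ ℓ')
    (hrow : ∀ ℓ, b0 ℓ + ∑ ℓ', B ℓ ℓ' ≤ 1)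
    (u : Firm L n → ℝ) (hu : ∀ i, u i = b0 i.1 * Real.log (b0 i.1))
    (Q Q' : Setoid (Fin n)) :
    a0n n a0 ⬝ᵥ ((1 - AQ B Q)⁻¹.mulVec u)
      = a0n n a0 ⬝ᵥ ((1 - AQ B Q')⁻¹.mulVec u) :=
  hicks_neutral_welfare_invariance_general n L a0 b0 B hb0 hB hrow u hu Q Q'

end
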